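/- arXiv:2209.05391 — 9 statements merged into one kernel-verified Lean document; each statement's English description precedes it below -/
import Mathlib

section
/- For n ∈ {2, 3}, every element of the subgroup Gₙ of permutations of F₂ⁿ generated by all CNOT and Toffoli permutations fixes the zero vector, and the group of permutations of F₂ⁿ ∖ {0} obtained by restricting elements of Gₙ to the nonzero vectors is exactly the full symmetric group on F₂ⁿ ∖ {0}. (For n = 2 there are no Toffoli gates, so Gₙ is generated by CNOT permutations alone.) -/
/-- A permutation of `Fin n → ZMod 2` is a CNOT permutation with control `i`
and target `j` (for some distinct `i ≠ j`). -/
def IsCnotPerm {n : ℕ} (π : Equiv.Perm (Fin n → ZMod 2)) : Prop :=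
  ∃ i j : Fin n, i ≠ j ∧ ∀ x, π x = Function.update x j (x j + x i)

/-- A permutation of `Fin n → ZMod 2` is a Toffoli permutation with controls
`i, j` and target `k` (for some pairwise distinct `i, j, k`). -/
def IsToffoliPerm {n : ℕ} (π : Equiv.Perm (Fin n → ZMod 2)) : Prop :=
  ∃ i j k : Fin n, i ≠ j ∧ i ≠ k ∧ j ≠ k ∧
    ∀ x, π x = Function.update x k (x k + x i * x j)

/-- The group `Gₙ` generated by all CNOT and Toffoli permutations on `n` qubits. -/
def gateGroup (n : ℕ) : Subgroup (Equiv.Perm (Fin n → ZMod 2)) :=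
  Subgroup.closure {π | IsCnotPerm π ∨ IsToffoliPerm π}

/-!
Every gate fixes `0`, so `Gₙ` acts on the `2ⁿ - 1` nonzero vectors, and for `n = 2, 3` this number
is prime. A product of CNOTs realises a linear map of order `2ⁿ - 1` (a Singer cycle), which is then
a full cycle on the nonzero vectors, while a single CNOT (for `n = 2`) or Toffoli gate (for `n = 3`)
swaps two nonzero vectors. A full cycle of prime length and a transposition generate the whole
symmetric group.
-/

open Equiv Equiv.Perm

theorem Subgroup.eq_top_of_orderOf_eq_card_of_isSwap {β : Type*} [Fintype β] [DecidableEq β]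
    {H : Subgroup (Perm β)} (hp : (Fintype.card β).Prime) {σ τ : Perm β} (hσH : σ ∈ H)
    (hσ : orderOf σ = Fintype.card β) (hτH : τ ∈ H) (hτ : τ.IsSwap) : H = ⊤ := by
  have hcycle : σ.IsCycle := isCycle_of_prime_order'' hp hσ
  have hsupport : σ.support = Finset.univ :=
    Finset.eq_univ_of_card _ (hcycle.orderOf ▸ hσ)
  rw [eq_top_iff, ← closure_prime_cycle_swap hp hcycle hsupport hτ, Subgroup.closure_le]
  exact Set.insert_subset hσH (Set.singleton_subset_iff.mpr hτH)

theorem Equiv.Perm.orderOf_subtypePerm {α : Type*} {p : α → Prop} [DecidablePred p]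
    {f : Perm α} (h₁ : ∀ x, p (f x) ↔ p x) (h₂ : ∀ x, f x ≠ x → p x) :
    orderOf (f.subtypePerm h₁) = orderOf f := by
  rw [← orderOf_injective (ofSubtype (p := p)) ofSubtype_injective, ofSubtype_subtypePerm h₁ h₂]

theorem card_nonzero_vectors (n : ℕ) :
    Fintype.card {x : Fin n → ZMod 2 // x ≠ 0} = 2 ^ n - 1 := by
  simp

theorem IsCnotPerm.mem_gateGroup {n : ℕ} {π : Perm (Fin n → ZMod 2)} (h : IsCnotPerm π) :
    π ∈ gateGroup n :=
  Subgroup.subset_closure (Or.inl h)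

theorem IsToffoliPerm.mem_gateGroup {n : ℕ} {π : Perm (Fin n → ZMod 2)} (h : IsToffoliPerm π) :
    π ∈ gateGroup n :=
  Subgroup.subset_closure (Or.inr h)

theorem gateGroup_le_stabilizer_zero (n : ℕ) :
    gateGroup n ≤ MulAction.stabilizer (Perm (Fin n → ZMod 2)) (0 : Fin n → ZMod 2) := by
  refine Subgroup.closure_le _ |>.mpr ?_
  rintro π (⟨i, j, -, hπ⟩ | ⟨i, j, k, -, -, -, hπ⟩) <;> simp [Perm.smul_def, hπ]

theorem apply_zero_of_mem_gateGroup {n : ℕ} {σ : Perm (Fin n → ZMod 2)}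
    (hσ : σ ∈ gateGroup n) : σ 0 = 0 :=
  gateGroup_le_stabilizer_zero n hσ

theorem ofSubtype_mem_gateGroup_of_prime {n : ℕ} (hp : (2 ^ n - 1).Prime)
    {σ : Perm (Fin n → ZMod 2)} (hσG : σ ∈ gateGroup n) (hσ : σ ^ (2 ^ n - 1) = 1) (hσ1 : σ ≠ 1)
    {a b : Fin n → ZMod 2} (ha : a ≠ 0) (hb : b ≠ 0) (hab : a ≠ b) (hswap : swap a b ∈ gateGroup n)
    (τ : Perm {x : Fin n → ZMod 2 // x ≠ 0}) : ofSubtype τ ∈ gateGroup n := by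
  have hσ₀ : σ 0 = 0 := apply_zero_of_mem_gateGroup hσG
  have h₁ : ∀ x, σ x ≠ 0 ↔ x ≠ 0 := fun x => σ.injective.ne_iff' hσ₀
  have h₂ : ∀ x, σ x ≠ x → x ≠ 0 := by
    rintro x hx rfl
    exact hx hσ₀
  have horder : orderOf σ = 2 ^ n - 1 := by
    have := Fact.mk hp
    exact orderOf_eq_prime hσ hσ1
  have htop : (gateGroup n).comap (ofSubtype (p := (· ≠ 0))) = ⊤ := by
    refine Subgroup.eq_top_of_orderOf_eq_card_of_isSwap (σ := σ.subtypePerm h₁)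
      (τ := swap ⟨a, ha⟩ ⟨b, hb⟩) ?_ ?_ ?_ ?_ ⟨_, _, Subtype.coe_ne_coe.mp hab, rfl⟩
    · rwa [card_nonzero_vectors]
    · rwa [Subgroup.mem_comap, ofSubtype_subtypePerm h₁ h₂]
    · rw [orderOf_subtypePerm h₁ h₂, horder, card_nonzero_vectors]
    · rwa [Subgroup.mem_comap, ofSubtype_swap_eq]
  exact (Subgroup.eq_top_iff' _).mp htop τ

def cnotPerm {n : ℕ} (i j : Fin n) (h : i ≠ j) : Perm (Fin n → ZMod 2) :=
  Function.Involutive.toPerm (fun x => Function.update x j (x j + x i)) fun x => by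
    ext k
    rcases eq_or_ne k j with rfl | hk
    · simp [h, add_assoc, CharTwo.add_self_eq_zero]
    · simp [Function.update_of_ne hk]

theorem cnotPerm_mem_gateGroup {n : ℕ} (i j : Fin n) (h : i ≠ j) :
    cnotPerm i j h ∈ gateGroup n :=
  IsCnotPerm.mem_gateGroup ⟨i, j, h, fun _ => rfl⟩

theorem ofSubtype_mem_gateGroup_two (τ : Perm {x : Fin 2 → ZMod 2 // x ≠ 0}) :
    ofSubtype τ ∈ gateGroup 2 :=
  ofSubtype_mem_gateGroup_of_prime (by norm_num)
    (mul_mem (cnotPerm_mem_gateGroup 0 1 (by decide)) (cnotPerm_mem_gateGroup 1 0 (by decide)))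
    (by decide) (by decide) (a := ![1, 0]) (b := ![1, 1]) (by decide) (by decide) (by decide)
    (IsCnotPerm.mem_gateGroup ⟨0, 1, by decide, by decide⟩) τ

theorem ofSubtype_mem_gateGroup_three (τ : Perm {x : Fin 3 → ZMod 2 // x ≠ 0}) :
    ofSubtype τ ∈ gateGroup 3 :=
  ofSubtype_mem_gateGroup_of_prime (by norm_num)
    (mul_mem (mul_mem (cnotPerm_mem_gateGroup 0 1 (by decide))
      (cnotPerm_mem_gateGroup 1 2 (by decide))) (cnotPerm_mem_gateGroup 2 0 (by decide)))
    (by decide) (by decide) (a := ![1, 1, 0]) (b := ![1, 1, 1]) (by decide) (by decide) (by decide)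
    (IsToffoliPerm.mem_gateGroup ⟨0, 1, 2, by decide, by decide, by decide, by decide⟩) τ

/-- For `n ∈ {2, 3}`: every element of `Gₙ` fixes the zero vector, and the
restrictions of elements of `Gₙ` to the nonzero vectors form the full
symmetric group on `F₂ⁿ \ {0}`: every permutation of the nonzero vectors is
the restriction of some element of `Gₙ`. -/
theorem gateGroup_restriction_eq_symmetric (n : ℕ) (hn : n = 2 ∨ n = 3) :
    (∀ σ ∈ gateGroup n, σ 0 = 0) ∧
    (∀ τ : Equiv.Perm {x : Fin n → ZMod 2 // x ≠ 0},
      ∃ σ ∈ gateGroup n,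
        ∀ x : {x : Fin n → ZMod 2 // x ≠ 0}, σ x.val = (τ x).val) := by
  refine ⟨fun σ hσ => apply_zero_of_mem_gateGroup hσ,
    fun τ => ⟨ofSubtype τ, ?_, fun x => ofSubtype_apply_coe τ x⟩⟩
  rcases hn with rfl | rfl
  · exact ofSubtype_mem_gateGroup_two τ
  · exact ofSubtype_mem_gateGroup_three τ
end

section
/- For n ≥ 2, the subgroup of permutations of F₂ⁿ generated by all CNOT permutations consists exactly of the F₂-linear automorphisms of F₂ⁿ; that is, a permutation of F₂ⁿ is a product of CNOT permutations if and only if it is an invertible F₂-linear map. In particular this subgroup is isomorphic to GL(n, F₂). -/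
open Matrix

theorem LinearEquiv.mem_range_toPermHom_iff {R M : Type*} [Semiring R] [AddCommMonoid M]
    [Module R M] {σ : Equiv.Perm M} :
    σ ∈ (MulAction.toPermHom (M ≃ₗ[R] M) M).range ↔ IsLinearMap R σ := by
  constructor
  · rintro ⟨e, rfl⟩
    exact ⟨e.map_add, e.map_smul⟩
  · intro h
    exact ⟨{ σ with map_add' := h.map_add, map_smul' := h.map_smul }, rfl⟩

theorem Matrix.transvection_mulVec {n R : Type*} [Fintype n] [DecidableEq n] [CommRing R]
    (i j : n) (c : R) (x : n → R) :
    transvection i j c *ᵥ x = Function.update x i (x i + c * x j) := by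
  ext k
  rcases eq_or_ne k i with rfl | hk
  · simp [transvection, add_mulVec, single_mulVec]
  · simp [transvection, add_mulVec, single_mulVec, hk]

namespace Matrix.GeneralLinearGroup

variable {n R : Type*} [Fintype n] [DecidableEq n] [CommRing R]

variable (n R) in
def toPerm : GL n R →* Equiv.Perm (n → R) :=
  (MulAction.toPermHom ((n → R) ≃ₗ[R] (n → R)) (n → R)).comp
    (toLin.trans (LinearMap.GeneralLinearGroup.generalLinearEquiv R (n → R))).toMonoidHom

@[simp]
theorem toPerm_apply (g : GL n R) (x : n → R) : toPerm n R g x = (g : Matrix n n R) *ᵥ x := rfl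

theorem toPerm_injective : Function.Injective (toPerm n R) := fun _ _ hgh =>
  Units.ext <| Matrix.toLin'.injective <| LinearMap.ext fun x => congr($hgh x)

theorem mem_range_toPerm_iff {σ : Equiv.Perm (n → R)} :
    σ ∈ (toPerm n R).range ↔ IsLinearMap R σ := by
  rw [← LinearEquiv.mem_range_toPermHom_iff, toPerm, MonoidHom.range_comp,
    MonoidHom.range_eq_top_of_surjective _ (MulEquiv.surjective _), ← MonoidHom.range_eq_map]

theorem exists_coe_eq_transvection {i j : n} (hij : i ≠ j) (c : R) :
    ∃ g : GL n R, (g : Matrix n n R) = transvection i j c :=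
  ⟨mk'' (transvection i j c) (by rw [det_transvection_of_ne _ _ hij]; exact isUnit_one), rfl⟩

variable (n R) in
def elementaryTransvections : Set (GL n R) :=
  {g | ∃ i j, i ≠ j ∧ (g : Matrix n n R) = transvection i j 1}

theorem closure_elementaryTransvections_zmod_two :
    Subgroup.closure (elementaryTransvections n (ZMod 2)) = ⊤ := by
  set H := Subgroup.closure (elementaryTransvections n (ZMod 2))
  refine (Subgroup.eq_top_iff' H).2 fun g => ?_
  obtain ⟨h, hH, hg⟩ : ∃ h ∈ H, (h : Matrix n n (ZMod 2)) = g := by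
    refine diagonal_transvection_induction_of_det_ne_zero
      (fun A => ∃ h ∈ H, (h : Matrix n n (ZMod 2)) = A) g
      (isUnit_iff_isUnit_det _ |>.1 g.isUnit).ne_zero ?diag ?transvec ?mul
    case diag =>
      intro D hD
      rw [det_diagonal, Finset.prod_ne_zero_iff] at hD
      have hD1 : D = 1 := funext fun i => Fin.eq_one_of_ne_zero (D i) (hD i (Finset.mem_univ i))
      exact ⟨1, H.one_mem, by simp [hD1]⟩
    case transvec =>
      rintro ⟨i, j, hij, c⟩
      rcases eq_or_ne c 0 with rfl | hc
      · exact ⟨1, H.one_mem, by simp [TransvectionStruct.toMatrix]⟩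
      · obtain rfl := Fin.eq_one_of_ne_zero c hc
        obtain ⟨h, hh⟩ := exists_coe_eq_transvection hij (1 : ZMod 2)
        exact ⟨h, Subgroup.subset_closure ⟨i, j, hij, hh⟩, hh⟩
    case mul =>
      rintro A B - - ⟨a, ha, rfl⟩ ⟨b, hb, rfl⟩
      exact ⟨a * b, H.mul_mem ha hb, rfl⟩
  rwa [← Units.ext hg]

end Matrix.GeneralLinearGroup

open Matrix.GeneralLinearGroup

theorem isCnotPerm_iff {n : ℕ} {π : Equiv.Perm (Fin n → ZMod 2)} :
    IsCnotPerm π ↔ ∃ i j : Fin n, i ≠ j ∧ ∀ x, π x = transvection j i 1 *ᵥ x := by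
  simp only [IsCnotPerm, transvection_mulVec, one_mul]

theorem image_toPerm_elementaryTransvections (n : ℕ) :
    toPerm (Fin n) (ZMod 2) '' elementaryTransvections (Fin n) (ZMod 2) = {π | IsCnotPerm π} := by
  ext π
  simp only [elementaryTransvections, Set.mem_image, Set.mem_ofPred_eq, isCnotPerm_iff]
  constructor
  · rintro ⟨g, ⟨i, j, hij, hg⟩, rfl⟩
    exact ⟨j, i, hij.symm, fun x => by rw [toPerm_apply, hg]⟩
  · rintro ⟨i, j, hij, hπ⟩
    obtain ⟨g, hg⟩ := exists_coe_eq_transvection hij.symm (1 : ZMod 2)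
    exact ⟨g, ⟨j, i, hij.symm, hg⟩, Equiv.ext fun x => by rw [toPerm_apply, hg, hπ]⟩

theorem closure_isCnotPerm_eq_range_toPerm (n : ℕ) :
    Subgroup.closure {π : Equiv.Perm (Fin n → ZMod 2) | IsCnotPerm π} =
      (toPerm (Fin n) (ZMod 2)).range := by
  rw [← image_toPerm_elementaryTransvections, ← MonoidHom.map_closure,
    closure_elementaryTransvections_zmod_two, MonoidHom.range_eq_map]

theorem cnot_closure_eq_linear_general (n : ℕ) :
    (∀ σ : Equiv.Perm (Fin n → ZMod 2),
      σ ∈ Subgroup.closure {π : Equiv.Perm (Fin n → ZMod 2) | IsCnotPerm π} ↔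
        IsLinearMap (ZMod 2) (σ : (Fin n → ZMod 2) → (Fin n → ZMod 2))) ∧
    Nonempty
      ((Subgroup.closure {π : Equiv.Perm (Fin n → ZMod 2) | IsCnotPerm π}) ≃*
        GL (Fin n) (ZMod 2)) := by
  rw [closure_isCnotPerm_eq_range_toPerm]
  exact ⟨fun σ => mem_range_toPerm_iff, ⟨(MonoidHom.ofInjective toPerm_injective).symm⟩⟩

/-- For `n ≥ 2`, the subgroup generated by the CNOT permutations consists
exactly of the invertible `F₂`-linear maps on `F₂ⁿ`; in particular it is
isomorphic to `GL(n, F₂)`. -/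
theorem cnot_closure_eq_linear (n : ℕ) (hn : 2 ≤ n) :
    (∀ σ : Equiv.Perm (Fin n → ZMod 2),
      σ ∈ Subgroup.closure {π : Equiv.Perm (Fin n → ZMod 2) | IsCnotPerm π} ↔
        IsLinearMap (ZMod 2) (σ : (Fin n → ZMod 2) → (Fin n → ZMod 2))) ∧
    Nonempty
      ((Subgroup.closure {π : Equiv.Perm (Fin n → ZMod 2) | IsCnotPerm π}) ≃*
        GL (Fin n) (ZMod 2)) :=
  cnot_closure_eq_linear_general n
end

section
/- Let n₁, n₂ ≥ 1 and e₁, e₂ ≥ 0. Suppose f : F₂^{n₁} → F₂^{n₁} satisfies: for every x of Hamming weight at most e₁, the first coordinate of f(x) is 0; and suppose g : F₂^{n₂} → F₂^{n₂} satisfies: for every y of Hamming weight at most e₂, the first coordinate of g(y) is 0. Define the composite map on inputs x : Fin n₂ → F₂^{n₁} by first applying f to each block x j, and then applying g to the vector of first coordinates (j ↦ (f (x j)) 0). Then for every input x whose total Hamming weight (the total number of nonzero bits over all n₂ blocks of size n₁) is at most (e₁+1)(e₂+1) − 1, the first coordinate of g (fun j ↦ (f (x j)) 0) is 0. -/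
/-! A block whose output bit is nonzero must carry at least `e₁ + 1` errors, and more than `e₂`
output bits must be nonzero for the outer circuit to fail; together that needs at least
`(e₁ + 1)(e₂ + 1)` errors in total. -/

open Finset

theorem hammingNorm_mul_le_sum {ι γ : Type*} [Fintype ι] [Zero γ] [DecidableEq γ]
    (y : ι → γ) (w : ι → ℕ) (e : ℕ) (h : ∀ j, y j ≠ 0 → e ≤ w j) :
    hammingNorm y * e ≤ ∑ j, w j :=
  calc hammingNorm y * e = ∑ _j ∈ {j | y j ≠ 0}, e := by
        rw [sum_const, smul_eq_mul, hammingNorm]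
    _ ≤ ∑ j ∈ {j | y j ≠ 0}, w j := sum_le_sum fun j hj => h j (mem_filter.mp hj).2
    _ ≤ ∑ j, w j := sum_le_sum_of_subset (subset_univ _)

theorem apply_eq_zero_of_sum_hammingNorm_lt {ι κ β γ δ : Type*} [Fintype ι] [Fintype κ]
    [Zero β] [DecidableEq β] [Zero γ] [DecidableEq γ] [Zero δ] {e₁ e₂ : ℕ}
    (f : (κ → β) → γ) (g : (ι → γ) → δ)
    (hf : ∀ x, hammingNorm x ≤ e₁ → f x = 0) (hg : ∀ y, hammingNorm y ≤ e₂ → g y = 0)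
    (x : ι → κ → β) (hx : ∑ j, hammingNorm (x j) < (e₁ + 1) * (e₂ + 1)) :
    g (fun j => f (x j)) = 0 := by
  apply hg
  by_contra! hy
  have hblock : ∀ j, f (x j) ≠ 0 → e₁ + 1 ≤ hammingNorm (x j) := fun j hj => by
    by_contra! hlt
    exact hj (hf (x j) (Nat.lt_succ_iff.mp hlt))
  have hsum := hammingNorm_mul_le_sum _ _ _ hblock
  have hcount : (e₂ + 1) * (e₁ + 1) ≤ hammingNorm (fun j => f (x j)) * (e₁ + 1) :=
    Nat.mul_le_mul_right _ hy
  linarith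

/-- Composition of purification circuits: feeding the outputs of `n₂` copies of
an `(n₁,1,e₁)` purification map into an `(n₂,1,e₂)` purification map yields an
`(n₁n₂, 1, (e₁+1)(e₂+1)−1)` purification map. -/
theorem purification_composition {n₁ n₂ : ℕ} (h₁ : 1 ≤ n₁) (h₂ : 1 ≤ n₂)
    (e₁ e₂ : ℕ)
    (f : (Fin n₁ → ZMod 2) → (Fin n₁ → ZMod 2))
    (g : (Fin n₂ → ZMod 2) → (Fin n₂ → ZMod 2))
    (hf : ∀ x : Fin n₁ → ZMod 2, hammingNorm x ≤ e₁ → f x ⟨0, h₁⟩ = 0)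
    (hg : ∀ y : Fin n₂ → ZMod 2, hammingNorm y ≤ e₂ → g y ⟨0, h₂⟩ = 0)
    (x : Fin n₂ → Fin n₁ → ZMod 2)
    (hx : ∑ j : Fin n₂, hammingNorm (x j) ≤ (e₁ + 1) * (e₂ + 1) - 1) :
    g (fun j : Fin n₂ => f (x j) ⟨0, h₁⟩) ⟨0, h₂⟩ = 0 := by
  have hpos : 0 < (e₁ + 1) * (e₂ + 1) := by positivity
  exact apply_eq_zero_of_sum_hammingNorm_lt (fun v => f v ⟨0, h₁⟩) (fun v => g v ⟨0, h₂⟩)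
    hf hg x (by omega)
end

section
/- Let G be a finite simple graph with vertex set V. Let v : V → F₂ assign an input error bit to each vertex and let e assign an input error bit to each edge of G. Define, for each vertex u, a(u) = v(u) + Σ(e(ε)) summed over all edges ε of G incident to u, and for each edge ε = {u,w} of G define the output f(ε) = e(ε) + a(u)·a(w), with all arithmetic in F₂ = ZMod 2. If the total number of nonzero input bits (over all vertices and all edges) is at most 1, then f(ε) = 0 for every edge ε of G. -/
/-!
A single error is either one vertex bit or one edge bit. With one vertex error the detect values are
the vertex bits themselves, so no two endpoints of an edge are both flagged. With one edge error
`ε₀` the detect value is `1` exactly at the two endpoints of `ε₀`, so for an edge `{u, w}` the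
product `a u * a w` is `1` exactly when `{u, w} = ε₀`. In both cases `a u * a w = e {u, w}`, and
the output `e {u, w} + a u * a w` vanishes in characteristic two.
-/

open Finset

theorem mul_eq_zero_of_card_filter_ne_zero_le_one {α M₀ : Type*} [MulZeroClass M₀]
    [DecidableEq M₀] {s : Finset α} {g : α → M₀} (h : #(s.filter fun x => g x ≠ 0) ≤ 1)
    {x y : α} (hx : x ∈ s) (hy : y ∈ s) (hxy : x ≠ y) : g x * g y = 0 := by
  by_cases hgx : g x = 0
  · rw [hgx, zero_mul]
  by_cases hgy : g y = 0
  · rw [hgy, mul_zero]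
  exact absurd (card_le_one.mp h x (by simp [hx, hgx]) y (by simp [hy, hgy])) hxy

theorem ZMod.two_eq_ite_of_filter_ne_zero_eq_singleton {α : Type*} [DecidableEq α]
    {s : Finset α} {g : α → ZMod 2} {x₀ : α} (h : s.filter (fun x => g x ≠ 0) = {x₀}) :
    ∀ x ∈ s, g x = if x = x₀ then 1 else 0 := by
  intro x hx
  split_ifs with hxx₀
  · subst hxx₀
    have hmem : x ∈ s.filter (fun x => g x ≠ 0) := h ▸ mem_singleton_self x
    exact Fin.eq_one_of_ne_zero _ (mem_filter.mp hmem).2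
  · by_contra hgx
    have hmem : x ∈ s.filter (fun x => g x ≠ 0) := mem_filter.mpr ⟨hx, hgx⟩
    exact hxx₀ (mem_singleton.mp (h ▸ hmem))

theorem Sym2.ite_mem_mul_ite_mem {α R : Type*} [DecidableEq α] [MulZeroOneClass R] {x y : α}
    (hxy : x ≠ y) (z : Sym2 α) :
    ((if x ∈ z then 1 else 0 : R) * if y ∈ z then 1 else 0) = if s(x, y) = z then 1 else 0 := by
  simp only [ite_zero_mul_ite_zero, Sym2.mem_and_mem_iff hxy, eq_comm, one_mul]

namespace SimpleGraph

variable {V R : Type*} [Fintype V] [DecidableEq V] {G : SimpleGraph V} [DecidableRel G.Adj]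
  [AddCommMonoid R] {v a : V → R} {e : Sym2 V → R}

theorem detect_eq_of_edge_bits_eq_zero
    (ha : ∀ u : V, a u = v u + ∑ ε ∈ G.edgeFinset.filter (fun ε => u ∈ ε), e ε)
    (he : ∀ ε ∈ G.edgeFinset, e ε = 0) (u : V) : a u = v u := by
  rw [ha u, sum_eq_zero fun ε hε => he ε (mem_of_mem_filter ε hε), add_zero]

theorem detect_eq_ite_mem_of_edge_bits_eq_ite [One R]
    (ha : ∀ u : V, a u = v u + ∑ ε ∈ G.edgeFinset.filter (fun ε => u ∈ ε), e ε)
    (hv : ∀ u, v u = 0) {ε₀ : Sym2 V} (hε₀ : ε₀ ∈ G.edgeFinset)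
    (he : ∀ ε ∈ G.edgeFinset, e ε = if ε = ε₀ then 1 else 0) (u : V) :
    a u = if u ∈ ε₀ then 1 else 0 := by
  rw [ha u, hv u, zero_add, sum_congr rfl fun ε hε => he ε (mem_of_mem_filter ε hε),
    sum_ite_eq']
  simp only [mem_filter, hε₀, true_and]

end SimpleGraph

/-- Graph construction of purification circuits: one auxiliary bit per vertex,
one data bit per edge.  The detect stage computes, for each vertex `u`,
`a u = v u + Σ e ε` over edges `ε` incident to `u`; the correct stage outputs,
for each edge `{u,w}`, `f {u,w} = e {u,w} + a u * a w`.  If there is at most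
one nonzero input bit in total, then every edge output is `0`. -/
theorem graph_purification_single_error {V : Type*} [Fintype V] [DecidableEq V]
    (G : SimpleGraph V) [DecidableRel G.Adj]
    (v : V → ZMod 2) (e : Sym2 V → ZMod 2)
    (a : V → ZMod 2)
    (ha : ∀ u : V, a u = v u + ∑ ε ∈ G.edgeFinset.filter (fun ε => u ∈ ε), e ε)
    (f : Sym2 V → ZMod 2)
    (hf : ∀ u w : V, G.Adj u w → f s(u, w) = e s(u, w) + a u * a w)
    (herr : (Finset.univ.filter fun u : V => v u ≠ 0).card +
        (G.edgeFinset.filter fun ε => e ε ≠ 0).card ≤ 1) :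
    ∀ ε ∈ G.edgeFinset, f ε = 0 := by
  intro ε hε
  induction ε using Sym2.ind with
  | _ u w =>
  have huw : G.Adj u w := SimpleGraph.mem_edgeFinset.mp hε
  suffices a u * a w = e s(u, w) by rw [hf u w huw, this, CharTwo.add_self_eq_zero]
  rcases Nat.le_one_iff_eq_zero_or_eq_one.mp (le_of_add_le_right herr) with hnone | hone
  · have he : ∀ ε ∈ G.edgeFinset, e ε = 0 := by simpa [filter_eq_empty_iff] using hnone
    rw [he _ hε, SimpleGraph.detect_eq_of_edge_bits_eq_zero ha he,
      SimpleGraph.detect_eq_of_edge_bits_eq_zero ha he]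
    exact mul_eq_zero_of_card_filter_ne_zero_le_one (by omega) (mem_univ u) (mem_univ w) huw.ne
  · obtain ⟨ε₀, hε₀⟩ := card_eq_one.mp hone
    have hv : ∀ x, v x = 0 := by
      have hno_vertex : #(univ.filter fun x : V => v x ≠ 0) = 0 := by omega
      simpa [filter_eq_empty_iff] using hno_vertex
    have he := ZMod.two_eq_ite_of_filter_ne_zero_eq_singleton hε₀
    have hdetect := SimpleGraph.detect_eq_ite_mem_of_edge_bits_eq_ite ha hv
      (mem_of_mem_filter ε₀ (hε₀ ▸ mem_singleton_self ε₀)) he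
    rw [hdetect, hdetect, Sym2.ite_mem_mul_ite_mem huw.ne, he _ hε]
end

section
/- Let n ≥ 3 and let indices range over ZMod n. Let v, e : ZMod n → F₂ be input vertex and edge error bits. Define a i = v i + e (i−1) + e i, b i = a i + e (i−1)·e i, and f i = e i + b i · b (i+1), all in F₂. Then the number of indices i with f i = 1 is at most (the number of indices with v i = 1) plus (the number of indices with e i = 1). -/
/-!
Write `b i = v i + (e (i - 1) ∨ e i)` for the syndrome at vertex `i`. An output error on a clean
edge `i` forces `b i = b (i + 1) = 1`, hence a fault at vertex `i` or at edge `i - 1`. In the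
latter case edge `i - 1` may also owe its own output error `f (i - 1) = 1 + b (i - 1) * b i`; but
then `b (i - 1) = 0`, which makes vertex `i - 1` faulty. So each faulty edge `i`
carries a spare unit `edgeCharge` when `v i = 1` or `b i * b (i + 1) = 1`; then
`f i + charge i ≤ v i + e i + charge (i - 1)` is a check on finitely many bits, and summing over
the cycle the charges cancel.
-/

open Finset

lemma sum_le_sum_of_add_le_add_comp_sub {G : Type*} [AddGroup G] [Fintype G]
    {F R P : G → ℕ} {g : G} (h : ∀ i, F i + P i ≤ R i + P (i - g)) :
    ∑ i, F i ≤ ∑ i, R i := by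
  have hshift : ∑ i, P (i - g) = ∑ i, P i := Equiv.sum_comp (Equiv.subRight g) P
  have hsum := sum_le_sum fun i (_ : i ∈ univ) => h i
  rw [sum_add_distrib, sum_add_distrib, hshift] at hsum
  omega

lemma card_filter_eq_one_eq_sum_val {α : Type*} [Fintype α] (x : α → ZMod 2) :
    #{i | x i = 1} = ∑ i, (x i).val := by
  rw [card_filter]
  refine sum_congr rfl fun i _ => ?_
  generalize x i = y
  revert y
  decide

/-- The charge of edge `i`, from the error bits `e`, `v` of edge `i` and vertex `i` and the
syndromes `b`, `bnext` of vertices `i` and `i + 1`. -/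
def edgeCharge (e v b bnext : ZMod 2) : ℕ :=
  if e = 1 ∧ (v = 1 ∨ b * bnext = 1) then 1 else 0

-- Primes step back along the cycle: `v'` is vertex `i - 1`, `e'`, `e''` are edges `i - 1`, `i - 2`.
lemma val_add_edgeCharge_le {v' v e'' e' e b' b : ZMod 2} (bnext : ZMod 2)
    (hb' : b' = v' + e'' + e' + e'' * e') (hb : b = v + e' + e + e' * e) :
    (e + b * bnext).val + edgeCharge e v b bnext ≤ v.val + e.val + edgeCharge e' v' b' b := by
  subst hb' hb
  revert v' v e'' e' e bnext
  decide

theorem extended_cycle_fault_tolerant_general (n : ℕ) [NeZero n]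
    (v e : ZMod n → ZMod 2) (a b f : ZMod n → ZMod 2)
    (ha : ∀ i : ZMod n, a i = v i + e (i - 1) + e i)
    (hb : ∀ i : ZMod n, b i = a i + e (i - 1) * e i)
    (hf : ∀ i : ZMod n, f i = e i + b i * b (i + 1)) :
    (Finset.univ.filter fun i : ZMod n => f i = 1).card ≤
      (Finset.univ.filter fun i : ZMod n => v i = 1).card +
        (Finset.univ.filter fun i : ZMod n => e i = 1).card := by
  have hb' (i : ZMod n) : b i = v i + e (i - 1) + e i + e (i - 1) * e i := by rw [hb, ha]
  simp only [card_filter_eq_one_eq_sum_val, ← sum_add_distrib]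
  refine sum_le_sum_of_add_le_add_comp_sub
    (g := 1) (P := fun i => edgeCharge (e i) (v i) (b i) (b (i + 1))) fun i => ?_
  rw [hf, sub_add_cancel]
  exact val_add_edgeCharge_le (b (i + 1)) (hb' (i - 1)) (hb' i)

/-- The extended (fault-tolerant) cycle purification circuit on the cycle with
`n ≥ 3` vertices indexed by `ZMod n` is combinatorially fault-tolerant for any
number of preparation errors: the number of output edge errors is at most the
total number of input errors. -/
theorem extended_cycle_fault_tolerant (n : ℕ) [NeZero n] (hn : 3 ≤ n)
    (v e : ZMod n → ZMod 2) (a b f : ZMod n → ZMod 2)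
    (ha : ∀ i : ZMod n, a i = v i + e (i - 1) + e i)
    (hb : ∀ i : ZMod n, b i = a i + e (i - 1) * e i)
    (hf : ∀ i : ZMod n, f i = e i + b i * b (i + 1)) :
    (Finset.univ.filter fun i : ZMod n => f i = 1).card ≤
      (Finset.univ.filter fun i : ZMod n => v i = 1).card +
        (Finset.univ.filter fun i : ZMod n => e i = 1).card :=
  extended_cycle_fault_tolerant_general n v e a b f ha hb hf
end

section
/- Let m ≥ 1 and let v, e : ℤ → F₂ be input vertex and edge error bits for a path, with v i = 0 for all i outside {0, …, m} and e i = 0 for all i outside {0, …, m−1}. Define a i = v i + e (i−1) + e i, b i = a i + e (i−1)·e i, and f i = e i + b i · b (i+1), all in F₂. Then the number of integers i with f i = 1 is at most (the number of integers with v i = 1) plus (the number of integers with e i = 1). -/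
/-!
Since `e (i-1) + e i + e (i-1) * e i` is the OR of the two edge bits, `b i` is `v i` flipped when an
edge at vertex `i` is faulty. Hence an output flip on edge `i` is either a faulty edge with a
faulty endpoint, or a clean edge each of whose endpoints carries exactly one of its vertex error
and its outer edge error. Charge the flip to vertex `i` if edge `i` is faulty and vertex `i + 1` is
clean, and otherwise to an input error at site `i + 1` (the edge if it is faulty, else the vertex).
This charge is injective.
-/

theorem Set.ncard_le_ncard_add_ncard_of_injOn_sum {α β γ : Type*} {s : Set α} {t : Set β}
    {u : Set γ} (φ : α → β ⊕ γ) (hφ : ∀ a ∈ s, φ a ∈ Sum.inl '' t ∪ Sum.inr '' u)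
    (hinj : Set.InjOn φ s) (ht : t.Finite) (hu : u.Finite) :
    s.ncard ≤ t.ncard + u.ncard :=
  calc s.ncard ≤ (Sum.inl '' t ∪ Sum.inr '' u : Set (β ⊕ γ)).ncard :=
        Set.ncard_le_ncard_of_injOn φ hφ hinj ((ht.image _).union (hu.image _))
    _ ≤ (Sum.inl '' t : Set (β ⊕ γ)).ncard + (Sum.inr '' u : Set (β ⊕ γ)).ncard :=
        Set.ncard_union_le _ _
    _ = t.ncard + u.ncard := by
        rw [Set.ncard_image_of_injective t Sum.inl_injective,
          Set.ncard_image_of_injective u Sum.inr_injective]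

theorem Int.finite_setOf_eq_of_eq_zero_outside {M : Type*} [Zero M] {x : ℤ → M} {c : M}
    (hc : c ≠ 0) (lo hi : ℤ) (hx : ∀ i : ℤ, (i < lo ∨ hi < i) → x i = 0) :
    {i : ℤ | x i = c}.Finite := by
  refine (Set.finite_Icc lo hi).subset fun i hi_eq => ?_
  by_contra hout
  rw [Set.mem_Icc, not_and_or, not_le, not_le] at hout
  exact hc (hi_eq.symm.trans (hx i hout))

namespace PurificationPath

theorem errors_of_output_flip {v₀ v₁ eₗ e₀ eᵣ : ZMod 2}
    (h : e₀ + (v₀ + eₗ + e₀ + eₗ * e₀) * (v₁ + e₀ + eᵣ + e₀ * eᵣ) = 1) :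
    (e₀ = 1 → v₁ = 0 → v₀ = 1) ∧ (¬(e₀ = 1 ∧ v₁ = 0) → eᵣ ≠ 1 → v₁ = 1) := by
  revert h; revert v₀ v₁ eₗ e₀ eᵣ; decide

/-- The input error charged with an output flip on edge `i`: `Sum.inl` for a vertex, `Sum.inr` for
an edge. -/
def charge (v e : ℤ → ZMod 2) (i : ℤ) : ℤ ⊕ ℤ :=
  if e i = 1 ∧ v (i + 1) = 0 then .inl i
  else if e (i + 1) = 1 then .inr (i + 1) else .inl (i + 1)

theorem charge_injective (v e : ℤ → ZMod 2) : Function.Injective (charge v e) := by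
  intro i j hij
  unfold charge at hij
  -- the only candidate collision, `.inl i` from both `i` and `i - 1`, needs `e i = 1` and `e i ≠ 1`
  split_ifs at hij <;> aesop

theorem charge_mem {v e : ℤ → ZMod 2} {i : ℤ} (hv : e i = 1 → v (i + 1) = 0 → v i = 1)
    (he : ¬(e i = 1 ∧ v (i + 1) = 0) → e (i + 1) ≠ 1 → v (i + 1) = 1) :
    charge v e i ∈ Sum.inl '' {j | v j = 1} ∪ Sum.inr '' {j | e j = 1} := by
  unfold charge
  split_ifs with hfirst hedge
  · exact Or.inl ⟨i, hv hfirst.1 hfirst.2, rfl⟩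
  · exact Or.inr ⟨i + 1, hedge, rfl⟩
  · exact Or.inl ⟨i + 1, he hfirst hedge, rfl⟩

end PurificationPath

theorem extended_path_fault_tolerant_general (m : ℕ)
    (v e : ℤ → ZMod 2)
    (hv : ∀ i : ℤ, (i < 0 ∨ (m : ℤ) < i) → v i = 0)
    (he : ∀ i : ℤ, (i < 0 ∨ (m : ℤ) - 1 < i) → e i = 0)
    (a b f : ℤ → ZMod 2)
    (ha : ∀ i : ℤ, a i = v i + e (i - 1) + e i)
    (hb : ∀ i : ℤ, b i = a i + e (i - 1) * e i)
    (hf : ∀ i : ℤ, f i = e i + b i * b (i + 1)) :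
    {i : ℤ | f i = 1}.ncard ≤ {i : ℤ | v i = 1}.ncard + {i : ℤ | e i = 1}.ncard := by
  refine Set.ncard_le_ncard_add_ncard_of_injOn_sum (PurificationPath.charge v e) (fun i hi => ?_)
    (PurificationPath.charge_injective v e).injOn
    (Int.finite_setOf_eq_of_eq_zero_outside one_ne_zero _ _ hv)
    (Int.finite_setOf_eq_of_eq_zero_outside one_ne_zero _ _ he)
  rw [Set.mem_ofPred_eq, hf, hb, hb, ha, ha, add_sub_cancel_right] at hi
  obtain ⟨hvertex, hedge⟩ := PurificationPath.errors_of_output_flip hi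
  exact PurificationPath.charge_mem hvertex hedge

/-- The extended (fault-tolerant) purification circuit over the path with
vertices `0, …, m` and edges `0, …, m−1` is combinatorially fault-tolerant for
any number of preparation errors. -/
theorem extended_path_fault_tolerant (m : ℕ) (hm : 1 ≤ m)
    (v e : ℤ → ZMod 2)
    (hv : ∀ i : ℤ, (i < 0 ∨ (m : ℤ) < i) → v i = 0)
    (he : ∀ i : ℤ, (i < 0 ∨ (m : ℤ) - 1 < i) → e i = 0)
    (a b f : ℤ → ZMod 2)
    (ha : ∀ i : ℤ, a i = v i + e (i - 1) + e i)
    (hb : ∀ i : ℤ, b i = a i + e (i - 1) * e i)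
    (hf : ∀ i : ℤ, f i = e i + b i * b (i + 1)) :
    {i : ℤ | f i = 1}.ncard ≤ {i : ℤ | v i = 1}.ncard + {i : ℤ | e i = 1}.ncard :=
  extended_path_fault_tolerant_general m v e hv he a b f ha hb hf
end

section
/- Let n ≥ 3 and let indices range over ZMod n. Let v, e : ZMod n → F₂, and define a i = v i + e (i−1) + e i, b i = a i + e (i−1)·e i, and f i = e i + b i · b (i+1), all in F₂. If e i = 0 and f i = 1, then (v i = 1 or e (i−1) = 1) and (v (i+1) = 1 or e (i+1) = 1). -/
/-! With `e i = 0` the cross terms vanish, so the two vertex bits read by edge `i` are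
`b i = v i + e (i - 1)` and `b (i + 1) = v (i + 1) + e (i + 1)`, and `f i = b i * b (i + 1)`.
Over `F₂` a product is `1` only if both factors are `1`, and a sum is `1` only if some
summand is `1`. -/

namespace ZMod

theorem mul_eq_one_iff_of_two {x y : ZMod 2} : x * y = 1 ↔ x = 1 ∧ y = 1 := by
  revert x y; decide

theorem eq_one_or_eq_one_of_add_eq_one_of_two {x y : ZMod 2} (h : x + y = 1) :
    x = 1 ∨ y = 1 := by
  revert x y h; decide

end ZMod

open ZMod in
theorem extended_cycle_output_error_condition_general (n : ℕ)
    (v e : ZMod n → ZMod 2)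
    (a b f : ZMod n → ZMod 2)
    (ha : ∀ i : ZMod n, a i = v i + e (i - 1) + e i)
    (hb : ∀ i : ZMod n, b i = a i + e (i - 1) * e i)
    (hf : ∀ i : ZMod n, f i = e i + b i * b (i + 1))
    (i : ZMod n) (hei : e i = 0) (hfi : f i = 1) :
    (v i = 1 ∨ e (i - 1) = 1) ∧ (v (i + 1) = 1 ∨ e (i + 1) = 1) := by
  have hbi : b i = v i + e (i - 1) := by rw [hb, ha, hei]; ring
  have hbi' : b (i + 1) = v (i + 1) + e (i + 1) := by
    rw [hb, ha, add_sub_cancel_right, hei]; ring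
  have hprod : b i * b (i + 1) = 1 := by rwa [hf, hei, zero_add] at hfi
  obtain ⟨h₁, h₂⟩ := mul_eq_one_iff_of_two.mp hprod
  exact ⟨eq_one_or_eq_one_of_add_eq_one_of_two (hbi ▸ h₁),
    eq_one_or_eq_one_of_add_eq_one_of_two (hbi' ▸ h₂)⟩

/-- In the extended cycle purification circuit, an edge with no input error
experiences an output error only if, for each of its two endpoints, there is
an input error either on that vertex or on the other edge incident to it. -/
theorem extended_cycle_output_error_condition (n : ℕ) (hn : 3 ≤ n)
    (v e : ZMod n → ZMod 2)
    (a b f : ZMod n → ZMod 2)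
    (ha : ∀ i : ZMod n, a i = v i + e (i - 1) + e i)
    (hb : ∀ i : ZMod n, b i = a i + e (i - 1) * e i)
    (hf : ∀ i : ZMod n, f i = e i + b i * b (i + 1))
    (i : ZMod n) (hei : e i = 0) (hfi : f i = 1) :
    (v i = 1 ∨ e (i - 1) = 1) ∧ (v (i + 1) = 1 ∨ e (i + 1) = 1) :=
  extended_cycle_output_error_condition_general n v e a b f ha hb hf i hei hfi
end

section
/- Let n ≥ 10 and let indices range over ZMod n. Let v, e : ZMod n → F₂ be input vertex and edge error bits, define a i = v i + e (i−1) + e i and f i = e i + a i · a (i+1), all in F₂. If (the number of indices with v i = 1) plus (the number of indices with e i = 1) is at most 3, then the number of indices with f i = 1 is at most (the number of indices with v i = 1) plus (the number of indices with e i = 1). -/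
/-!
Charge every output error `j` to an input error: to edge `j` if `e j = 1`; otherwise both
syndromes `a j` and `a (j + 1)` fire, and `a (j + 1) = v (j + 1) + e (j + 1)`, so vertex `j + 1`
or else edge `j + 1` is faulty. This charge is injective except at a collision: `j` is charged to
edge `j + 1` while `j + 1` is an output error charged to its own edge. A collision at `i` already
exhibits three input errors, namely edge `i + 1`, one of `v i, e (i - 1)` (as `a i = 1`) and one
of `v (i + 2), e (i + 2)` (as `a (i + 2) = 0`). With at most three errors these are all of them,
and then every output error lies in `{i, i + 1, i + 2}`.
-/

open Finset

lemma Finset.three_add_card_sdiff_union_union_le {α : Type*} [DecidableEq α] {s a b c : Finset α}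
    (hab : Disjoint a b) (hac : Disjoint a c) (hbc : Disjoint b c) (ha : (s ∩ a).Nonempty)
    (hb : (s ∩ b).Nonempty) (hc : (s ∩ c).Nonempty) : 3 + #(s \ (a ∪ b ∪ c)) ≤ #s := by
  have hunion : #(s ∩ (a ∪ b ∪ c)) = #(s ∩ a) + #(s ∩ b) + #(s ∩ c) := by
    rw [inter_union_distrib_left, inter_union_distrib_left, card_union_of_disjoint,
      card_union_of_disjoint]
    · exact hab.mono inter_subset_right inter_subset_right
    · rw [← inter_union_distrib_left]
      exact (hac.sup_left hbc).mono inter_subset_right inter_subset_right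
  have := card_inter_add_card_sdiff s (a ∪ b ∪ c)
  have := ha.card_pos
  have := hb.card_pos
  have := hc.card_pos
  omega

namespace CyclePurification

variable {n : ℕ}

-- At the call sites below `hkn` is discharged by `omega` from a hypothesis `6 ≤ n` in context.
lemma ne_of_sub_eq_natCast {x y : ZMod n} (k : ℕ) (h : y - x = k := by ring)
    (hk₀ : 0 < k := by norm_num) (hkn : k < n := by omega) : x ≠ y := by
  rintro rfl
  rw [sub_self, eq_comm, ZMod.natCast_eq_zero_iff] at h
  exact Nat.not_dvd_of_pos_of_lt hk₀ hkn h

lemma bit_eq_zero_of_ne_one : ∀ {x : ZMod 2}, x ≠ 1 → x = 0 := by decide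

lemma bit_eq_one_or_eq_one_of_add_eq_one : ∀ {x y : ZMod 2}, x + y = 1 → x = 1 ∨ y = 1 := by
  decide

def syndrome (v e : ZMod n → ZMod 2) (i : ZMod n) : ZMod 2 := v i + e (i - 1) + e i

def output (v e : ZMod n → ZMod 2) (i : ZMod n) : ZMod 2 :=
  e i + syndrome v e i * syndrome v e (i + 1)

def errors [NeZero n] (v e : ZMod n → ZMod 2) : Finset (ZMod n ⊕ ZMod n) :=
  ({i | v i = 1} : Finset (ZMod n)).disjSum {i | e i = 1}

lemma card_errors [NeZero n] (v e : ZMod n → ZMod 2) :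
    #(errors v e) = #{i | v i = 1} + #{i | e i = 1} :=
  card_disjSum _ _

variable {v e : ZMod n → ZMod 2}

lemma syndrome_eq_one_of_output_eq_one {j : ZMod n} (hf : output v e j = 1) (he : e j ≠ 1) :
    syndrome v e j = 1 ∧ syndrome v e (j + 1) = 1 := by
  rwa [output, bit_eq_zero_of_ne_one he, zero_add, mul_eq_one] at hf

lemma syndrome_succ_eq_edge_succ {j : ZMod n} (he : e j ≠ 1) (hv : v (j + 1) ≠ 1) :
    syndrome v e (j + 1) = e (j + 1) := by
  rw [syndrome, add_sub_cancel_right, bit_eq_zero_of_ne_one he, bit_eq_zero_of_ne_one hv,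
    zero_add, zero_add]

def charge (v e : ZMod n → ZMod 2) (j : ZMod n) : ZMod n ⊕ ZMod n :=
  if e j = 1 then .inr j else if v (j + 1) = 1 then .inl (j + 1) else .inr (j + 1)

lemma charge_mem_errors [NeZero n] {j : ZMod n} (hf : output v e j = 1) :
    charge v e j ∈ errors v e := by
  unfold charge
  split_ifs with hej hvj
  · simpa [errors] using hej
  · simpa [errors] using hvj
  · have h := (syndrome_eq_one_of_output_eq_one hf hej).2
    rw [syndrome_succ_eq_edge_succ hej hvj] at h
    simpa [errors] using h

def IsCollision (v e : ZMod n → ZMod 2) (i : ZMod n) : Prop :=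
  output v e i = 1 ∧ output v e (i + 1) = 1 ∧ e i ≠ 1 ∧ v (i + 1) ≠ 1

lemma charge_injOn (h : ∀ i, ¬ IsCollision v e i) :
    Set.InjOn (charge v e) {j | output v e j = 1} := by
  intro j (hj : output v e j = 1) k (hk : output v e k = 1) hjk
  unfold charge at hjk
  split_ifs at hjk <;> simp only [Sum.inr.injEq, Sum.inl.injEq, add_left_inj] at hjk
  · exact hjk
  · subst hjk; exact (h k ⟨hk, hj, ‹_›, ‹_›⟩).elim
  · exact hjk
  · subst hjk; exact (h j ⟨hj, hk, ‹_›, ‹_›⟩).elim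
  · exact hjk

lemma card_output_le_card_errors_of_forall_not_isCollision [NeZero n]
    (h : ∀ i, ¬ IsCollision v e i) :
    #{j | output v e j = 1} ≤ #(errors v e) :=
  card_le_card_of_injOn (charge v e) (fun _ hj => charge_mem_errors (mem_filter.1 hj).2)
    ((charge_injOn h).mono (by simp))

def window (i : ZMod n) : Finset (ZMod n ⊕ ZMod n) :=
  {.inl i, .inr (i - 1)} ∪ {.inl (i + 2), .inr (i + 2)} ∪ {.inr (i + 1)}

namespace IsCollision

variable {i : ZMod n} (hc : IsCollision v e i)
include hc

lemma syndrome_eq_one : syndrome v e i = 1 ∧ syndrome v e (i + 1) = 1 :=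
  syndrome_eq_one_of_output_eq_one hc.1 hc.2.2.1

lemma edge_succ_eq_one : e (i + 1) = 1 := by
  simpa only [syndrome_succ_eq_edge_succ hc.2.2.1 hc.2.2.2] using hc.syndrome_eq_one.2

lemma vertex_add_edge_pred_eq_one : v i + e (i - 1) = 1 := by
  simpa only [syndrome, bit_eq_zero_of_ne_one hc.2.2.1, add_zero] using hc.syndrome_eq_one.1

lemma vertex_add_edge_add_two_eq_one : v (i + 2) + e (i + 2) = 1 := by
  have h := hc.2.1
  rw [output, hc.edge_succ_eq_one, hc.syndrome_eq_one.2, one_mul, syndrome,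
    add_sub_cancel_right, hc.edge_succ_eq_one, show i + 1 + 1 = i + 2 by ring] at h
  grind

lemma three_add_card_sdiff_window_le [NeZero n] (hn : 6 ≤ n) :
    3 + #(errors v e \ window i) ≤ #(errors v e) := by
  have h02 : i ≠ i + 2 := ne_of_sub_eq_natCast 2
  have h21 : i + 2 ≠ i + 1 := (ne_of_sub_eq_natCast 1).symm
  have h31 : i - 1 ≠ i + 1 := ne_of_sub_eq_natCast 2
  have h32 : i - 1 ≠ i + 2 := ne_of_sub_eq_natCast 3
  rw [window]
  refine three_add_card_sdiff_union_union_le ?_ ?_ ?_ ?_ ?_ ?_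
  iterate 3 simp only [disjoint_insert_left, disjoint_singleton_left, mem_insert, mem_singleton,
    Sum.inl.injEq, Sum.inr.injEq, reduceCtorEq, h02, h21, h31, h32, or_self, not_false_eq_true,
    and_self]
  · rcases bit_eq_one_or_eq_one_of_add_eq_one hc.vertex_add_edge_pred_eq_one with h | h
    · exact ⟨.inl i, by simp [errors, h]⟩
    · exact ⟨.inr (i - 1), by simp [errors, h]⟩
  · rcases bit_eq_one_or_eq_one_of_add_eq_one hc.vertex_add_edge_add_two_eq_one with h | h
    · exact ⟨.inl (i + 2), by simp [errors, h]⟩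
    · exact ⟨.inr (i + 2), by simp [errors, h]⟩
  · exact ⟨.inr (i + 1), by simp [errors, hc.edge_succ_eq_one]⟩

lemma output_eq_zero [NeZero n] (hn : 6 ≤ n) (hsub : errors v e ⊆ window i) {j : ZMod n}
    (hj₀ : j ≠ i) (hj₁ : j ≠ i + 1) (hj₂ : j ≠ i + 2) : output v e j = 0 := by
  have hv : ∀ k, k ≠ i → k ≠ i + 2 → v k = 0 := by
    refine fun k hk₀ hk₂ => bit_eq_zero_of_ne_one fun h => ?_
    have := hsub (inl_mem_disjSum.2 (mem_filter.2 ⟨mem_univ k, h⟩))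
    simp only [window, mem_union, mem_insert, mem_singleton, Sum.inl.injEq, reduceCtorEq] at this
    tauto
  have he : ∀ k, k ≠ i - 1 → k ≠ i + 1 → k ≠ i + 2 → e k = 0 := by
    refine fun k hk₀ hk₁ hk₂ => bit_eq_zero_of_ne_one fun h => ?_
    have := hsub (inr_mem_disjSum.2 (mem_filter.2 ⟨mem_univ k, h⟩))
    simp only [window, mem_union, mem_insert, mem_singleton, Sum.inr.injEq, reduceCtorEq] at this
    tauto
  by_cases hl : j = i - 1
  · have : output v e (i - 1) = v (i - 1) + e (i - 1 - 1) := by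
      rw [output, sub_add_cancel, hc.syndrome_eq_one.1, mul_one, syndrome]
      grind
    rw [hl, this, hv _ (ne_of_sub_eq_natCast 1) (ne_of_sub_eq_natCast 3),
      he _ (ne_of_sub_eq_natCast 1) (ne_of_sub_eq_natCast 3) (ne_of_sub_eq_natCast 4),
      add_zero]
  by_cases hr : j = i + 3
  · have h3 : e (i + 3) = 0 := he _ (ne_of_sub_eq_natCast 4).symm
      (ne_of_sub_eq_natCast 2).symm (ne_of_sub_eq_natCast 1).symm
    have h4 : syndrome v e (i + 3 + 1) = 0 := by
      rw [syndrome, add_sub_cancel_right, h3,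
        hv _ (ne_of_sub_eq_natCast 4).symm (ne_of_sub_eq_natCast 2).symm,
        he _ (ne_of_sub_eq_natCast 5).symm (ne_of_sub_eq_natCast 3).symm
          (ne_of_sub_eq_natCast 2).symm, add_zero, add_zero]
    rw [hr, output, h3, h4, mul_zero, add_zero]
  · rw [output, syndrome, hv j hj₀ hj₂, he j hl hj₁ hj₂,
      he (j - 1) (fun h => hj₀ (by linear_combination h))
        (fun h => hj₂ (by linear_combination h)) (fun h => hr (by linear_combination h))]
    simp

lemma card_output_le_card_errors [NeZero n] (hn : 6 ≤ n) (h3 : #(errors v e) ≤ 3) :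
    #{j | output v e j = 1} ≤ #(errors v e) := by
  have hW := hc.three_add_card_sdiff_window_le hn
  have hsub : errors v e ⊆ window i := by
    rw [← sdiff_eq_empty_iff_subset, ← card_eq_zero]
    omega
  calc #{j | output v e j = 1} ≤ #({i, i + 1, i + 2} : Finset (ZMod n)) := by
        refine card_le_card fun j hj => ?_
        by_contra hj'
        simp only [mem_insert, mem_singleton, not_or] at hj'
        simp [hc.output_eq_zero hn hsub hj'.1 hj'.2.1 hj'.2.2] at hj
    _ ≤ 3 := card_le_three
    _ ≤ #(errors v e) := by omega

end IsCollision

end CyclePurification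

open CyclePurification

/-- The basic cycle purification circuit on a cycle with `n ≥ 10` vertices is
combinatorially fault-tolerant up to 3 preparation errors: any set of at most
3 input errors leads to at most that many output errors. -/
theorem cycle_fault_tolerant_up_to_three (n : ℕ) [NeZero n] (hn : 10 ≤ n)
    (v e : ZMod n → ZMod 2) (a f : ZMod n → ZMod 2)
    (ha : ∀ i : ZMod n, a i = v i + e (i - 1) + e i)
    (hf : ∀ i : ZMod n, f i = e i + a i * a (i + 1))
    (herr : (Finset.univ.filter fun i : ZMod n => v i = 1).card +
        (Finset.univ.filter fun i : ZMod n => e i = 1).card ≤ 3) :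
    (Finset.univ.filter fun i : ZMod n => f i = 1).card ≤
      (Finset.univ.filter fun i : ZMod n => v i = 1).card +
        (Finset.univ.filter fun i : ZMod n => e i = 1).card := by
  obtain rfl : a = syndrome v e := funext ha
  obtain rfl : f = output v e := funext hf
  rw [← card_errors] at herr ⊢
  by_cases h : ∃ i, IsCollision v e i
  · obtain ⟨i, hc⟩ := h
    exact hc.card_output_le_card_errors (by omega) herr
  · exact card_output_le_card_errors_of_forall_not_isCollision (not_exists.1 h)
end

section
/- Let m ≥ 1, n = 2^(m+1) − 1 and e = 2^m − 1. Let x : Fin n → F₂ have Hamming weight at most e. Let w be the number of indices i with 1 ≤ i ≤ n−1 and x i + x 0 = 1, and let z₀ = x 0 + (C(w, e+1) mod 2) in F₂. Then z₀ = 0. -/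
/-!
After the CNOT stage, `w` is the Hamming distance from `x` to the constant word `x 0`.
If `x 0 = 0` this is the weight of `x`, at most `e`, so `C(w, e + 1) = 0`. If `x 0 = 1` it is
`n - wt x ≥ n - e = 2 ^ m`, so `2 ^ m ≤ w < 2 ^ (m + 1)`; then the binary digits of `2 ^ m` are
dominated by those of `w`, and Lucas's theorem makes `C(w, 2 ^ m)` odd, cancelling `x 0`.
-/

open Finset

theorem Nat.cast_choose_two_pow_eq_one_zmod_two {m w : ℕ} (hlo : 2 ^ m ≤ w) (hhi : w < 2 ^ (m + 1)) :
    (w.choose (2 ^ m) : ZMod 2) = 1 := by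
  induction m generalizing w with
  | zero =>
    obtain rfl : w = 1 := by omega
    simp
  | succ m ih =>
    have : Fact (Nat.Prime 2) := ⟨Nat.prime_two⟩
    have lucas := (ZMod.natCast_eq_natCast_iff _ _ _).mpr
      (Choose.choose_modEq_choose_mod_mul_choose_div_nat (n := w) (k := 2 ^ (m + 1)) (p := 2))
    rw [lucas, pow_succ, Nat.mul_mod_left, Nat.mul_div_cancel _ two_pos, Nat.choose_zero_right,
      one_mul]
    exact ih (by omega) (by omega)

theorem ZMod.add_eq_one_iff_ne (a b : ZMod 2) : a + b = 1 ↔ a ≠ b := by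
  decide +revert

theorem card_filter_ne_and_ne_eq_hammingDist {ι β : Type*} [Fintype ι] [DecidableEq ι]
    [DecidableEq β] (x : ι → β) (j : ι) :
    #{i | i ≠ j ∧ x i ≠ x j} = hammingDist x (fun _ ↦ x j) := by
  unfold hammingDist
  congr 1
  ext i
  by_cases hij : i = j <;> simp [hij]

theorem hammingDist_one_right_add_hammingNorm {ι : Type*} [Fintype ι] (x : ι → ZMod 2) :
    hammingDist x (fun _ ↦ 1) + hammingNorm x = Fintype.card ι := by
  have hne_one (a : ZMod 2) : a ≠ 1 ↔ ¬a ≠ 0 := by decide +revert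
  simp only [hammingDist, hammingNorm, hne_one]
  rw [add_comm, card_filter_add_card_filter_not, card_univ]

theorem explicit_circuit_correct_general (m n e : ℕ)
    (hn : n = 2 ^ (m + 1) - 1) (he : e = 2 ^ m - 1) (h0 : 0 < n)
    (x : Fin n → ZMod 2) (hx : hammingNorm x ≤ e)
    (w : ℕ)
    (hw : w = (Finset.univ.filter fun i : Fin n =>
        1 ≤ (i : ℕ) ∧ x i + x ⟨0, h0⟩ = 1).card)
    (z₀ : ZMod 2) (hz : z₀ = x ⟨0, h0⟩ + (w.choose (e + 1) : ZMod 2)) :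
    z₀ = 0 := by
  have hw_dist : w = hammingDist x (fun _ ↦ x ⟨0, h0⟩) := by
    rw [hw, ← card_filter_ne_and_ne_eq_hammingDist]
    simp only [ZMod.add_eq_one_iff_ne, Nat.one_le_iff_ne_zero, ne_eq, Fin.ext_iff]
  rcases (by decide : ∀ a : ZMod 2, a = 0 ∨ a = 1) (x ⟨0, h0⟩) with hx0 | hx0
  · have hwe : w ≤ e := by rw [hw_dist, hx0]; exact hx
    rw [hz, hx0, Nat.choose_eq_zero_of_lt (Nat.lt_succ_of_le hwe)]
    simp
  · have hw_compl : w + hammingNorm x = n := by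
      simpa [hw_dist, hx0] using hammingDist_one_right_add_hammingNorm x
    have hpow_le : 2 ^ m ≤ 2 ^ (m + 1) := Nat.pow_le_pow_right two_pos m.le_succ
    have hpow_pos : 1 ≤ 2 ^ m := Nat.one_le_two_pow
    rw [hz, hx0, show e + 1 = 2 ^ m by omega, Nat.cast_choose_two_pow_eq_one_zmod_two (by omega) (by omega)]
    decide

/-- Correctness of the explicit `(2^(m+1)−1, 1, 2^m−1)` purification circuit:
for any input `x` of Hamming weight at most `e = 2^m − 1`, letting `w` be the
number of indices `i` with `1 ≤ i ≤ n − 1` and `x i + x 0 = 1` (the bits set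
after the CNOT stage), the output bit `z₀ = x 0 + C(w, e+1) (mod 2)` on qubit
`0` is `0`. -/
theorem explicit_circuit_correct (m n e : ℕ) (hm : 1 ≤ m)
    (hn : n = 2 ^ (m + 1) - 1) (he : e = 2 ^ m - 1) (h0 : 0 < n)
    (x : Fin n → ZMod 2) (hx : hammingNorm x ≤ e)
    (w : ℕ)
    (hw : w = (Finset.univ.filter fun i : Fin n =>
        1 ≤ (i : ℕ) ∧ x i + x ⟨0, h0⟩ = 1).card)
    (z₀ : ZMod 2) (hz : z₀ = x ⟨0, h0⟩ + (w.choose (e + 1) : ZMod 2)) :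
    z₀ = 0 :=
  explicit_circuit_correct_general m n e hn he h0 x hx w hw z₀ hz
end
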